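/- For every infinite word W : ℕ → A over a finite alphabet A there exists a uniformly recurrent infinite word Ŵ : ℕ → A such that every factor of Ŵ is a factor of W. -/

import Mathlib

/-- The factor of the infinite word `W` of length `n` occurring at position `i`. -/
def factorAt {A : Type*} (W : ℕ → A) (i n : ℕ) : List A :=
  (List.range n).map (fun j => W (i + j))

/-- `u` is a factor of the infinite word `W`. -/
def IsFactor {A : Type*} (W : ℕ → A) (u : List A) : Prop :=
  ∃ i : ℕ, u = factorAt W i u.length

/-- `W` is uniformly recurrent: every factor `v` occurs in every sufficiently long
factor of `W`. -/
def UniformlyRecurrent {A : Type*} (W : ℕ → A) : Prop :=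
  ∀ v : List A, IsFactor W v → ∃ N : ℕ,
    ∀ u : List A, IsFactor W u → u.length = N → v <:+: u

/-!
The factorial, right-extendable languages inside the language of `W` are closed under
intersections of chains (a chain of nonempty subsets of the finite alphabet has nonempty
intersection), so by Zorn's lemma there is a minimal one `L`, and a word built letter by letter
inside `L` has all its factors in `L`. Such a word is uniformly recurrent: if a factor `v` were
missing from arbitrarily long factors, the words extending to arbitrarily long `v`-free words of
`L` would form another such language (pigeonhole on the next letter), contained in `L` and hence
equal to it by minimality, yet it does not contain `v`.
-/

theorem Set.nonempty_sInter_of_isChain {α : Type*} [Finite α] {F : Set (Set α)}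
    (hF : IsChain (· ⊆ ·) F) (hne : F.Nonempty) (h : ∀ s ∈ F, s.Nonempty) :
    (⋂₀ F).Nonempty := by
  obtain ⟨E, hE⟩ := exists_minimal_of_wellFoundedLT (· ∈ F) hne
  obtain ⟨a, ha⟩ := h E hE.prop
  refine ⟨a, fun s hs => ?_⟩
  rcases hF.total hE.prop hs with hEs | hsE
  · exact hEs ha
  · exact hE.le_of_le hs hsE ha

section Languages

variable {A : Type*}

@[simp] theorem length_factorAt (W : ℕ → A) (i n : ℕ) : (factorAt W i n).length = n := by
  simp [factorAt]

theorem factorAt_add (W : ℕ → A) (i m n : ℕ) :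
    factorAt W i (m + n) = factorAt W i m ++ factorAt W (i + m) n := by
  simp [factorAt, List.range_add, Function.comp_def, Nat.add_assoc]

theorem factorAt_succ (W : ℕ → A) (i n : ℕ) :
    factorAt W i (n + 1) = factorAt W i n ++ [W (i + n)] := by
  rw [factorAt_add]; simp [factorAt]

theorem IsFactor.infix_factorAt_zero {W : ℕ → A} {u : List A} (hu : IsFactor W u) :
    ∃ n, u <:+: factorAt W 0 n := by
  obtain ⟨i, hi⟩ := hu
  refine ⟨i + u.length, ?_⟩
  rw [factorAt_add, Nat.zero_add, ← hi]
  exact (List.suffix_append _ _).isInfix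

def IsFactorial (L : Set (List A)) : Prop :=
  ∀ ⦃u v : List A⦄, u <:+: v → v ∈ L → u ∈ L

structure IsExtendableLanguage (L : Set (List A)) : Prop where
  nil_mem : [] ∈ L
  isFactorial : IsFactorial L
  exists_append_singleton_mem : ∀ u ∈ L, ∃ a, u ++ [a] ∈ L

theorem isFactorial_setOf_isFactor (W : ℕ → A) : IsFactorial {u | IsFactor W u} := by
  rintro v u ⟨s, t, rfl⟩ ⟨i, hi⟩
  simp only [List.length_append, ← Nat.add_assoc, factorAt_add] at hi
  exact ⟨i + s.length, (List.append_inj (List.append_inj' hi (by simp)).1 (by simp)).2⟩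

theorem isExtendableLanguage_setOf_isFactor (W : ℕ → A) :
    IsExtendableLanguage {u | IsFactor W u} where
  nil_mem := ⟨0, rfl⟩
  isFactorial := isFactorial_setOf_isFactor W
  exists_append_singleton_mem := by
    rintro u ⟨i, hi⟩
    refine ⟨W (i + u.length), i, ?_⟩
    rw [List.length_append, List.length_singleton, factorAt_succ, ← hi]

theorem IsExtendableLanguage.sInter [Finite A] {c : Set (Set (List A))}
    (hc : ∀ L ∈ c, IsExtendableLanguage L) (hchain : IsChain (· ⊆ ·) c) (hne : c.Nonempty) :
    IsExtendableLanguage (⋂₀ c) where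
  nil_mem L hL := (hc L hL).nil_mem
  isFactorial _ _ huv hv L hL := (hc L hL).isFactorial huv (hv L hL)
  exists_append_singleton_mem u hu := by
    let extensions (L : Set (List A)) : Set A := {a | u ++ [a] ∈ L}
    have hchain' : IsChain (· ⊆ ·) (extensions '' c) :=
      hchain.image_of_map_rel _ _ _ fun _ _ hLM _ (ha : _ ∈ _) => hLM ha
    obtain ⟨a, ha⟩ := Set.nonempty_sInter_of_isChain hchain' (hne.image _) <| by
      rintro _ ⟨L, hL, rfl⟩
      exact (hc L hL).exists_append_singleton_mem u (hu L hL)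
    exact ⟨a, fun L hL => ha _ ⟨L, hL, rfl⟩⟩

theorem IsExtendableLanguage.exists_minimal_subset [Finite A] {L₀ : Set (List A)}
    (hL₀ : IsExtendableLanguage L₀) :
    ∃ L ⊆ L₀, Minimal IsExtendableLanguage L := by
  refine zorn_superset_nonempty _ (fun c hc hchain hne => ?_) L₀ hL₀
  exact ⟨⋂₀ c, IsExtendableLanguage.sInter hc hchain hne, fun _ => Set.sInter_subset_of_mem⟩

theorem IsExtendableLanguage.exists_word {L : Set (List A)} (hL : IsExtendableLanguage L) :
    ∃ f : ℕ → A, ∀ u, IsFactor f u → u ∈ L := by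
  choose next hnext using hL.exists_append_singleton_mem
  let prefixes : ℕ → L := fun n =>
    Nat.rec ⟨[], hL.nil_mem⟩ (fun _ u => ⟨u.1 ++ [next u.1 u.2], hnext u.1 u.2⟩) n
  let f (n : ℕ) : A := next (prefixes n).1 (prefixes n).2
  have hprefixes : ∀ n, factorAt f 0 n = (prefixes n).1 := by
    intro n
    induction n with
    | zero => rfl
    | succ n ih => rw [factorAt_succ, ih, Nat.zero_add]
  refine ⟨f, fun u hu => ?_⟩
  obtain ⟨n, hn⟩ := IsFactor.infix_factorAt_zero hu
  exact hL.isFactorial hn (hprefixes n ▸ (prefixes n).2)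

def extendableCore (M : Set (List A)) : Set (List A) :=
  {u | ∀ N, ∃ t : List A, N ≤ t.length ∧ u ++ t ∈ M}

theorem IsFactorial.extendableCore_subset {M : Set (List A)} (hM : IsFactorial M) :
    extendableCore M ⊆ M := fun u hu =>
  let ⟨t, _, ht⟩ := hu 0
  hM (List.prefix_append u t).isInfix ht

theorem IsFactorial.isExtendableLanguage_extendableCore [Finite A] {M : Set (List A)}
    (hM : IsFactorial M) (hlong : ∀ N, ∃ w ∈ M, N ≤ w.length) :
    IsExtendableLanguage (extendableCore M) where
  nil_mem N :=
    let ⟨w, hw, hN⟩ := hlong N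
    ⟨w, hN, hw⟩
  isFactorial := by
    rintro v u ⟨p, q, rfl⟩ hu N
    obtain ⟨t, hN, ht⟩ := hu N
    refine ⟨q ++ t, by simp only [List.length_append]; omega, hM ⟨p, [], ?_⟩ ht⟩
    simp
  exists_append_singleton_mem u hu := by
    choose t hlen ht using fun N => hu (N + 1)
    have hne (N : ℕ) : t N ≠ [] := List.ne_nil_of_length_pos (by have := hlen N; omega)
    -- Pigeonhole: infinitely many of the extensions `t N` start with the same letter.
    obtain ⟨a, ha⟩ := Finite.exists_infinite_fiber fun N => (t N).head (hne N)
    refine ⟨a, fun N => ?_⟩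
    obtain ⟨K, hKa, hNK⟩ := (Set.infinite_coe_iff.mp ha).exists_gt N
    refine ⟨(t K).tail, by simp only [List.length_tail]; have := hlen K; omega, ?_⟩
    have htK : t K = a :: (t K).tail := by
      rw [← hKa]
      exact (List.cons_head_tail (hne K)).symm
    rw [List.append_assoc, List.singleton_append, ← htK]
    exact ht K

theorem uniformlyRecurrent_of_minimal [Finite A] {L : Set (List A)}
    (hL : Minimal IsExtendableLanguage L) {f : ℕ → A} (hf : ∀ u, IsFactor f u → u ∈ L) :
    UniformlyRecurrent f := by
  intro v hv
  by_contra! hcon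
  let M := {w ∈ L | ¬ v <:+: w}
  have hM : IsFactorial M := fun u w huw hw =>
    ⟨hL.prop.isFactorial huw hw.1, fun hvu => hw.2 (hvu.trans huw)⟩
  have hlong (N : ℕ) : ∃ w ∈ M, N ≤ w.length :=
    let ⟨w, hw, hlen, hvw⟩ := hcon N
    ⟨w, ⟨hf w hw, hvw⟩, hlen.ge⟩
  have hLM : L ⊆ extendableCore M :=
    hL.le_of_le (hM.isExtendableLanguage_extendableCore hlong)
      (hM.extendableCore_subset.trans fun _ hw => hw.1)
  exact (hM.extendableCore_subset (hLM (hf v hv))).2 (List.infix_refl v)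

end Languages

/-- For every infinite word `W` over a finite alphabet there is a uniformly
recurrent infinite word all of whose factors are factors of `W`. -/
theorem stmt2 {A : Type*} [Fintype A] (W : ℕ → A) :
    ∃ What : ℕ → A, UniformlyRecurrent What ∧
      ∀ u : List A, IsFactor What u → IsFactor W u := by
  obtain ⟨L, hLW, hL⟩ := (isExtendableLanguage_setOf_isFactor W).exists_minimal_subset
  obtain ⟨f, hf⟩ := hL.prop.exists_word
  exact ⟨f, uniformlyRecurrent_of_minimal hL hf, fun u hu => hLW (hf u hu)⟩
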